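/- arXiv:2008.08054 — 4 statements merged into one kernel-verified Lean document; each statement's English description precedes it below -/
import Mathlib

section
/- Let G be a connected multigraph and let P be a partition of its vertex set into blocks, each inducing a connected subgraph. Call a spanning tree t of G 'hierarchical' (with respect to P) if the quotient multigraph obtained from t by contracting each block of P to a single vertex is itself a spanning tree of the quotient multigraph G/P (in particular, t has at most one edge between any two distinct blocks). Then the number of hierarchical spanning trees of G equals τ(G/P) · ∏_{B ∈ P} τ(G[B]), where τ denotes the number of spanning trees of a multigraph and G[B] is the sub-multigraph induced by block B. -/
/-- A multigraph: vertices, edges, and an (ordered) pair of endpoints per edge. -/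
structure Multigraph where
  V : Type
  E : Type
  ends : E → V × V

namespace Multigraph

variable (G : Multigraph)

/-- Two vertices are joined by some edge from the edge set `S`. -/
def Adj (S : Set G.E) (a b : G.V) : Prop :=
  ∃ e ∈ S, G.ends e = (a, b) ∨ G.ends e = (b, a)

/-- The edge set `S` connects the whole vertex set of `G`. -/
def Connects (S : Set G.E) : Prop :=
  ∀ a b : G.V, Relation.ReflTransGen (G.Adj S) a b

/-- `S` is a spanning tree of `G`: it connects `G` and is minimal with this property. -/
def IsSpanningTree (S : Set G.E) : Prop :=
  G.Connects S ∧ ∀ e ∈ S, ¬ G.Connects (S \ {e})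

/-- The number of spanning trees of `G`. -/
noncomputable def tau : ℕ := Nat.card {S : Set G.E // G.IsSpanningTree S}

/-- The induced sub-multigraph on the block `π ⁻¹' {b}`. -/
def induced {B : Type} (π : G.V → B) (b : B) : Multigraph where
  V := {v : G.V // π v = b}
  E := {e : G.E // π (G.ends e).1 = b ∧ π (G.ends e).2 = b}
  ends e := (⟨(G.ends e.1).1, e.2.1⟩, ⟨(G.ends e.1).2, e.2.2⟩)

/-- The quotient multigraph of `G` by the block map `π`: one vertex per block, one
edge per edge of `G` joining two distinct blocks (parallel edges retained). -/
def quot {B : Type} (π : G.V → B) : Multigraph where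
  V := B
  E := {e : G.E // π (G.ends e).1 ≠ π (G.ends e).2}
  ends e := (π (G.ends e.1).1, π (G.ends e.1).2)

/-- The edges of `S` crossing between distinct blocks, viewed as edges of the quotient. -/
def crossing {B : Type} (π : G.V → B) (S : Set G.E) : Set (G.quot π).E :=
  {e : {e : G.E // π (G.ends e).1 ≠ π (G.ends e).2} | e.1 ∈ S}

/-- The restriction of the edge set `S` to the block `b`. -/
def restrict {B : Type} (π : G.V → B) (b : B) (S : Set G.E) : Set (G.induced π b).E :=
  {e : {e : G.E // π (G.ends e).1 = b ∧ π (G.ends e).2 = b} | e.1 ∈ S}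

/-- `S` is a hierarchical spanning tree with respect to blocks `π`: it is a spanning
tree of `G` whose quotient is a spanning tree of the quotient multigraph. -/
def IsHierarchical {B : Type} (π : G.V → B) (S : Set G.E) : Prop :=
  G.IsSpanningTree S ∧ (G.quot π).IsSpanningTree (G.crossing π S)

/-- The induced sub-multigraph on a vertex subset `U`. -/
def inducedOn (U : Set G.V) : Multigraph where
  V := U
  E := {e : G.E | (G.ends e).1 ∈ U ∧ (G.ends e).2 ∈ U}
  ends e := (⟨(G.ends e.1).1, e.2.1⟩, ⟨(G.ends e.1).2, e.2.2⟩)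

/-- Edge `e` crosses between the two distinct blocks `b` and `b'`. -/
def Crosses {B : Type} (π : G.V → B) (e : G.E) (b b' : B) : Prop :=
  (π (G.ends e).1 = b ∧ π (G.ends e).2 = b') ∨ (π (G.ends e).1 = b' ∧ π (G.ends e).2 = b)

end Multigraph


namespace Multigraph

section Helpers

variable (G : Multigraph) {B : Type} (π : G.V → B)

lemma adj_symm {S : Set G.E} {a b : G.V} (h : G.Adj S a b) : G.Adj S b a := by
  obtain ⟨e, he, h⟩ := h; exact ⟨e, he, h.symm⟩

lemma rtg_symm {S : Set G.E} {a b : G.V}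
    (h : Relation.ReflTransGen (G.Adj S) a b) : Relation.ReflTransGen (G.Adj S) b a :=
  (@Relation.ReflTransGen.symmetric _ _ ⟨fun _ _ h => G.adj_symm h⟩).symm _ _ h

/-- If the two endpoints of `e` remain connected after deleting `e`, then deleting `e`
keeps the graph connected. -/
lemma connects_diff {T : Set G.E} {e : G.E} {p q : G.V}
    (hT : G.Connects T) (he : G.ends e = (p, q))
    (hpq : Relation.ReflTransGen (G.Adj (T \ {e})) p q) :
    G.Connects (T \ {e}) := by
  intro a c
  induction hT a c with
  | refl => exact .refl
  | tail _ h2 ih =>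
    obtain ⟨f, hf, hor⟩ := h2
    by_cases hfe : f = e
    · subst hfe
      rw [he] at hor
      rcases hor with h' | h'
      · obtain ⟨h1, h2⟩ := Prod.mk.injEq _ _ _ _ ▸ h'
        subst h1; subst h2; exact ih.trans hpq
      · obtain ⟨h1, h2⟩ := Prod.mk.injEq _ _ _ _ ▸ h'
        subst h1; subst h2; exact ih.trans (G.rtg_symm hpq)
    · exact ih.tail ⟨f, ⟨hf, hfe⟩, hor⟩

lemma proj_walk {S : Set G.E} {x y : G.V}
    (h : Relation.ReflTransGen (G.Adj S) x y) :
    Relation.ReflTransGen ((G.quot π).Adj (G.crossing π S)) (π x) (π y) := by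
  induction h with
  | refl => exact .refl
  | tail _ h2 ih =>
    obtain ⟨e, he, hor⟩ := h2
    by_cases hc : π (G.ends e).1 = π (G.ends e).2
    · rcases hor with h' | h' <;> rw [h'] at hc
      · exact hc ▸ ih
      · exact hc ▸ ih
    · refine ih.tail ⟨⟨e, hc⟩, he, ?_⟩
      rcases hor with h' | h' <;> simp [Multigraph.quot, h']

lemma block_lift {S : Set G.E} {b : B} {u v : (G.induced π b).V}
    (h : Relation.ReflTransGen ((G.induced π b).Adj (G.restrict π b S)) u v) :
    Relation.ReflTransGen (G.Adj S) u.1 v.1 := by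
  induction h with
  | refl => exact .refl
  | tail _ h2 ih =>
    obtain ⟨f, hf, hor⟩ := h2
    refine ih.tail ⟨f.1, hf, ?_⟩
    rcases hor with h' | h'
    · exact Or.inl (congrArg (fun p => (p.1.1, p.2.1)) h')
    · exact Or.inr (congrArg (fun p => (p.1.1, p.2.1)) h')

lemma connects_of_pieces {S : Set G.E}
    (hq : (G.quot π).Connects (G.crossing π S))
    (hb : ∀ b : B, (G.induced π b).Connects (G.restrict π b S)) :
    G.Connects S := by
  have key : ∀ (x : G.V) (β : B),
      Relation.ReflTransGen ((G.quot π).Adj (G.crossing π S)) (π x) β →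
      ∀ z : G.V, π z = β → Relation.ReflTransGen (G.Adj S) x z := by
    intro x β h
    induction h with
    | refl =>
      intro z hz
      exact G.block_lift π (hb (π x) ⟨x, rfl⟩ ⟨z, hz⟩)
    | @tail δ γ _ h2 ih =>
      intro z hz
      obtain ⟨f, hf, hor⟩ := h2
      rcases hor with h' | h'
      · obtain ⟨h1, h2⟩ := Prod.mk.injEq _ _ _ _ ▸ h'
        have hx : Relation.ReflTransGen (G.Adj S) x (G.ends f.1).1 := ih _ h1
        have hstep : G.Adj S (G.ends f.1).1 (G.ends f.1).2 := ⟨f.1, hf, Or.inl rfl⟩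
        have htail : Relation.ReflTransGen (G.Adj S) (G.ends f.1).2 z :=
          G.block_lift π (hb γ ⟨(G.ends f.1).2, h2⟩ ⟨z, hz⟩)
        exact (hx.tail hstep).trans htail
      · obtain ⟨h1, h2⟩ := Prod.mk.injEq _ _ _ _ ▸ h'
        have hx : Relation.ReflTransGen (G.Adj S) x (G.ends f.1).2 := ih _ h2
        have hstep : G.Adj S (G.ends f.1).2 (G.ends f.1).1 := ⟨f.1, hf, Or.inr rfl⟩
        have htail : Relation.ReflTransGen (G.Adj S) (G.ends f.1).1 z :=
          G.block_lift π (hb γ ⟨(G.ends f.1).1, h1⟩ ⟨z, hz⟩)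
        exact (hx.tail hstep).trans htail
  intro x y
  exact key x (π y) (hq (π x) (π y)) y rfl

/-- Excursion-splitting lemma: a walk starting outside block `b` and ending in `b`
has a first return point. -/
lemma lemF {S : Set G.E} {b : B} :
    ∀ (l : List G.V) (v y : G.V), List.Chain (G.Adj S) v l → π v ≠ b →
      (v :: l).getLast (List.cons_ne_nil v l) = y → π y = b →
      ∃ (u w : G.V) (l₂ : List G.V), π u ≠ b ∧ π w = b ∧
        G.Adj S u w ∧ List.Chain (G.Adj S) w l₂ ∧
        (w :: l₂).getLast (List.cons_ne_nil w l₂) = y ∧ l₂.length < l.length ∧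
        Relation.ReflTransGen
          (fun β γ => β ≠ b ∧ γ ≠ b ∧ (G.quot π).Adj (G.crossing π S) β γ) (π v) (π u) := by
  intro l
  induction l with
  | nil =>
    intro v y _ hv hlast hy
    have hvy : v = y := by simpa using hlast
    subst hvy
    exact absurd hy hv
  | cons w' l'' ih =>
    intro v y hch hv hlast hy
    replace hch := List.chain_cons.mp hch
    obtain ⟨hvw', hch'⟩ := hch
    have hlast' : (w' :: l'').getLast (List.cons_ne_nil _ _) = y := by
      rw [← hlast]; exact (List.getLast_cons (List.cons_ne_nil _ _)).symm
    by_cases hw' : π w' = b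
    · exact ⟨v, w', l'', hv, hw', hvw', hch', hlast', Nat.lt_succ_self _,
        Relation.ReflTransGen.refl⟩
    · obtain ⟨u, w, l₂, hu, hw, haduw, hch₂, hlast₂, hlen, hrtg⟩ :=
        ih w' y hch' hw' hlast' hy
      refine ⟨u, w, l₂, hu, hw, haduw, hch₂, hlast₂, hlen.trans (Nat.lt_succ_self _), ?_⟩
      by_cases hvv : π v = π w'
      · exact hvv ▸ hrtg
      · refine Relation.ReflTransGen.head ⟨hv, hw', ?_⟩ hrtg
        obtain ⟨e, he, hor⟩ := hvw'
        have hc : π (G.ends e).1 ≠ π (G.ends e).2 := by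
          rcases hor with h' | h'
          · rw [h']; exact hvv
          · rw [h']; exact Ne.symm hvv
        refine ⟨⟨e, hc⟩, he, ?_⟩
        rcases hor with h' | h' <;> simp [Multigraph.quot, h']

end Helpers

end Multigraph


namespace Multigraph

section Helpers2

variable (G : Multigraph) {B : Type} (π : G.V → B)

/-- Key lemma: if the crossing edges of `S` form a spanning tree of the quotient, then
any `S`-walk between two vertices of a block `b` can be replaced by a walk inside `b`. -/
lemma lemE {S : Set G.E} (hT : (G.quot π).IsSpanningTree (G.crossing π S)) {b : B} :
    ∀ (n : ℕ) (l : List G.V) (x y : G.V), l.length ≤ n → List.Chain (G.Adj S) x l →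
      (x :: l).getLast (List.cons_ne_nil x l) = y →
      ∀ (hx : π x = b) (hy : π y = b),
      Relation.ReflTransGen ((G.induced π b).Adj (G.restrict π b S)) ⟨x, hx⟩ ⟨y, hy⟩ := by
  intro n
  induction n with
  | zero =>
    intro l x y hlen hch hlast hx hy
    have hl : l = [] := List.length_eq_zero_iff.mp (Nat.le_zero.mp hlen)
    subst hl
    have hxy : x = y := by simpa using hlast
    subst hxy
    exact .refl
  | succ n ihn =>
    intro l x y hlen hch hlast hx hy
    cases l with
    | nil =>
      have hxy : x = y := by simpa using hlast
      subst hxy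
      exact .refl
    | cons v l' =>
      replace hch := List.chain_cons.mp hch
      obtain ⟨hxv, hch'⟩ := hch
      have hlast' : (v :: l').getLast (List.cons_ne_nil _ _) = y := by
        rw [← hlast]; exact (List.getLast_cons (List.cons_ne_nil _ _)).symm
      have hlen' : l'.length ≤ n := Nat.le_of_succ_le_succ hlen
      by_cases hv : π v = b
      · -- step stays in block b
        have step : (G.induced π b).Adj (G.restrict π b S) ⟨x, hx⟩ ⟨v, hv⟩ := by
          obtain ⟨e, he, hor⟩ := hxv
          rcases hor with h' | h'
          · have hee : π (G.ends e).1 = b ∧ π (G.ends e).2 = b := by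
              rw [h']; exact ⟨hx, hv⟩
            refine ⟨⟨e, hee⟩, he, Or.inl ?_⟩
            show ((⟨(G.ends e).1, hee.1⟩ : (G.induced π b).V), (⟨(G.ends e).2, hee.2⟩ : (G.induced π b).V)) = _
            have h1 : (G.ends e).1 = x := congrArg Prod.fst h'
            have h2 : (G.ends e).2 = v := congrArg Prod.snd h'
            exact Prod.ext (Subtype.ext h1) (Subtype.ext h2)
          · have hee : π (G.ends e).1 = b ∧ π (G.ends e).2 = b := by
              rw [h']; exact ⟨hv, hx⟩
            refine ⟨⟨e, hee⟩, he, Or.inr ?_⟩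
            show ((⟨(G.ends e).1, hee.1⟩ : (G.induced π b).V), (⟨(G.ends e).2, hee.2⟩ : (G.induced π b).V)) = _
            have h1 : (G.ends e).1 = v := congrArg Prod.fst h'
            have h2 : (G.ends e).2 = x := congrArg Prod.snd h'
            exact Prod.ext (Subtype.ext h1) (Subtype.ext h2)
        exact Relation.ReflTransGen.head step (ihn l' v y hlen' hch' hlast' hv hy)
      · -- excursion out of block b
        obtain ⟨u, w, l₂, hu, hw, haduw, hch₂, hlast₂, hlen₂, hrtg⟩ :=
          G.lemF π l' v y hch' hv hlast' hy
        obtain ⟨e₁, he₁, hor₁⟩ := hxv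
        obtain ⟨e₂, he₂, hor₂⟩ := haduw
        have hc₁ : π (G.ends e₁).1 ≠ π (G.ends e₁).2 := by
          rcases hor₁ with h' | h' <;> rw [h']
          · exact fun hh => hv (hx ▸ hh.symm ▸ rfl)
          · exact fun hh => hv (hx ▸ hh ▸ rfl)
        have hc₂ : π (G.ends e₂).1 ≠ π (G.ends e₂).2 := by
          rcases hor₂ with h' | h' <;> rw [h']
          · exact fun hh => hu (hw ▸ hh ▸ rfl)
          · exact fun hh => hu (hw ▸ hh.symm ▸ rfl)
        have hee : e₁ = e₂ := by
          by_contra hne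
          have hnc := hT.2 ⟨e₂, hc₂⟩ he₂
          apply hnc
          -- endpoints of e₂ in the quotient are π u and b (in some order)
          -- step from b to π v via e₁
          have hstep1 : (G.quot π).Adj (G.crossing π S \ {⟨e₂, hc₂⟩}) b (π v) := by
            refine ⟨⟨e₁, hc₁⟩, ⟨he₁, fun hmem => hne (congrArg Subtype.val hmem)⟩, ?_⟩
            rcases hor₁ with h' | h'
            · exact Or.inl (by rw [show (G.quot π).ends ⟨e₁, hc₁⟩ = (π (G.ends e₁).1, π (G.ends e₁).2) from rfl, h']; exact Prod.ext hx rfl)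
            · exact Or.inr (by rw [show (G.quot π).ends ⟨e₁, hc₁⟩ = (π (G.ends e₁).1, π (G.ends e₁).2) from rfl, h']; exact Prod.ext rfl hx)
          -- walk from π v to π u avoiding b, hence avoiding e₂
          have hwalk : Relation.ReflTransGen ((G.quot π).Adj (G.crossing π S \ {⟨e₂, hc₂⟩})) (π v) (π u) := by
            refine Relation.ReflTransGen.mono ?_ _ _ hrtg
            rintro β γ ⟨hβ, hγ, f, hfS, hforn⟩
            refine ⟨f, ⟨hfS, ?_⟩, hforn⟩
            rintro hmem
            replace hmem := Set.mem_singleton_iff.mp hmem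
            subst hmem
            have hqe : (G.quot π).ends ⟨e₂, hc₂⟩ = (π (G.ends e₂).1, π (G.ends e₂).2) := rfl
            rw [hqe] at hforn
            rcases hor₂ with h' | h'
            · have hb2 : π (G.ends e₂).2 = b := by rw [h']; exact hw
              rcases hforn with h'' | h''
              · exact hγ ((congrArg Prod.snd h'').symm.trans hb2)
              · exact hβ ((congrArg Prod.snd h'').symm.trans hb2)
            · have hb1 : π (G.ends e₂).1 = b := by rw [h']; exact hw
              rcases hforn with h'' | h''
              · exact hβ ((congrArg Prod.fst h'').symm.trans hb1)
              · exact hγ ((congrArg Prod.fst h'').symm.trans hb1)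
          have hbu : Relation.ReflTransGen ((G.quot π).Adj (G.crossing π S \ {⟨e₂, hc₂⟩})) b (π u) :=
            Relation.ReflTransGen.head hstep1 hwalk
          -- now connect the two endpoints of e₂
          refine (G.quot π).connects_diff hT.1
            (e := ⟨e₂, hc₂⟩) (p := π (G.ends e₂).1) (q := π (G.ends e₂).2) rfl ?_
          rcases hor₂ with h' | h'
          · -- ends e₂ = (u, w) : so π ends = (π u, b)
            have h1 : π (G.ends e₂).1 = π u := by rw [h']
            have h2 : π (G.ends e₂).2 = b := by rw [h']; exact hw
            rw [h1, h2]
            exact (G.quot π).rtg_symm hbu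
          · have h1 : π (G.ends e₂).1 = b := by rw [h']; exact hw
            have h2 : π (G.ends e₂).2 = π u := by rw [h']
            rw [h1, h2]
            exact hbu
        -- now e₁ = e₂ forces x = w
        subst hee
        have hxw : x = w := by
          rcases hor₁ with h' | h' <;> rcases hor₂ with h'' | h''
          · exfalso
            have : x = u := congrArg Prod.fst (h'.symm.trans h'')
            exact hu (this ▸ hx)
          · exact (congrArg Prod.fst (h'.symm.trans h''))
          · exact (congrArg Prod.snd (h'.symm.trans h''))
          · exfalso
            have : v = w := congrArg Prod.fst (h'.symm.trans h'')
            exact hv (this ▸ hw)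
        subst hxw
        exact ihn l₂ x y (Nat.le_of_lt (Nat.lt_of_lt_of_le hlen₂ hlen')) hch₂ hlast₂ hx hy

lemma lemE' {S : Set G.E} (hT : (G.quot π).IsSpanningTree (G.crossing π S)) {b : B}
    {x y : G.V} (hx : π x = b) (hy : π y = b)
    (h : Relation.ReflTransGen (G.Adj S) x y) :
    Relation.ReflTransGen ((G.induced π b).Adj (G.restrict π b S)) ⟨x, hx⟩ ⟨y, hy⟩ := by
  obtain ⟨l, hch, hlast⟩ := List.exists_isChain_cons_of_relationReflTransGen h
  exact G.lemE π hT l.length l x y le_rfl hch hlast hx hy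

end Helpers2

end Multigraph


namespace Multigraph

section Helpers3

variable (G : Multigraph) {B : Type} (π : G.V → B)

lemma restrict_diff {S : Set G.E} {b : B} (f : (G.induced π b).E) :
    G.restrict π b S \ {f} = G.restrict π b (S \ {f.1}) := by
  ext g
  constructor
  · rintro ⟨hg, hgf⟩
    exact ⟨hg, fun h => hgf (Subtype.ext h)⟩
  · rintro ⟨hg, hgf⟩
    exact ⟨hg, fun h => hgf (congrArg Subtype.val h)⟩

lemma crossing_diff {S : Set G.E} (f : (G.quot π).E) :
    G.crossing π S \ {f} = G.crossing π (S \ {f.1}) := by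
  ext g
  constructor
  · rintro ⟨hg, hgf⟩
    exact ⟨hg, fun h => hgf (Subtype.ext h)⟩
  · rintro ⟨hg, hgf⟩
    exact ⟨hg, fun h => hgf (congrArg Subtype.val h)⟩

lemma crossing_diff_block {S : Set G.E} {e : G.E}
    (h : π (G.ends e).1 = π (G.ends e).2) :
    G.crossing π (S \ {e}) = G.crossing π S := by
  ext g
  constructor
  · rintro ⟨hg, _⟩
    exact hg
  · intro hg
    exact ⟨hg, fun hge => g.2 (by rw [show g.1 = e from hge]; exact h)⟩

/-- Forward direction: a hierarchical spanning tree restricts to a spanning tree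
of each block. -/
lemma restrict_isST {S : Set G.E} (hH : G.IsHierarchical π S) (b : B) :
    (G.induced π b).IsSpanningTree (G.restrict π b S) := by
  obtain ⟨hS, hT⟩ := hH
  constructor
  · intro u v
    exact G.lemE' π hT u.2 v.2 (hS.1 u.1 v.1)
  · intro f hf hcon
    apply hS.2 f.1 hf
    have hpq : Relation.ReflTransGen (G.Adj (S \ {f.1})) (G.ends f.1).1 (G.ends f.1).2 := by
      have h2 := hcon ⟨(G.ends f.1).1, f.2.1⟩ ⟨(G.ends f.1).2, f.2.2⟩
      rw [G.restrict_diff] at h2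
      exact G.block_lift π h2
    exact G.connects_diff hS.1 rfl hpq

/-- Backward direction: if the crossing edges form a spanning tree of the quotient and
each block restriction is a spanning tree of the block, then `S` is a spanning tree. -/
lemma isST_of_pieces {S : Set G.E} (hsurj : Function.Surjective π)
    (hT : (G.quot π).IsSpanningTree (G.crossing π S))
    (hb : ∀ b : B, (G.induced π b).IsSpanningTree (G.restrict π b S)) :
    G.IsSpanningTree S := by
  constructor
  · exact G.connects_of_pieces π hT.1 (fun b => (hb b).1)
  · intro e he hcon
    by_cases hc : π (G.ends e).1 = π (G.ends e).2
    · set b := π (G.ends e).1 with hbdef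
      have hf2 : π (G.ends e).1 = b ∧ π (G.ends e).2 = b := ⟨rfl, hc.symm⟩
      set f : (G.induced π b).E := ⟨e, hf2⟩ with hfdef
      apply (hb b).2 f he
      have hT' : (G.quot π).IsSpanningTree (G.crossing π (S \ {e})) := by
        rw [G.crossing_diff_block π hc]; exact hT
      have hpq := G.lemE' π hT' hf2.1 hf2.2 (hcon (G.ends e).1 (G.ends e).2)
      have hreq : G.restrict π b S \ {f} = G.restrict π b (S \ {e}) := G.restrict_diff π f
      refine (G.induced π b).connects_diff (hb b).1 (e := f) rfl ?_
      rw [hreq]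
      exact hpq
    · apply hT.2 ⟨e, hc⟩ he
      rw [G.crossing_diff π ⟨e, hc⟩]
      intro β γ
      obtain ⟨xx, rfl⟩ := hsurj β
      obtain ⟨yy, rfl⟩ := hsurj γ
      exact G.proj_walk π (hcon xx yy)

/-- Reassemble an edge set from quotient edges and block edge sets. -/
def glue (T : Set (G.quot π).E) (t : ∀ b : B, Set (G.induced π b).E) : Set G.E :=
  {e | (∃ h : π (G.ends e).1 ≠ π (G.ends e).2, (⟨e, h⟩ : (G.quot π).E) ∈ T) ∨
       (∃ (b : B) (h : π (G.ends e).1 = b ∧ π (G.ends e).2 = b),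
          (⟨e, h⟩ : (G.induced π b).E) ∈ t b)}

lemma crossing_glue (T : Set (G.quot π).E) (t : ∀ b : B, Set (G.induced π b).E) :
    G.crossing π (G.glue π T t) = T := by
  ext f
  constructor
  · rintro (⟨h, hf⟩ | ⟨b, h, _⟩)
    · rwa [show (⟨f.1, h⟩ : (G.quot π).E) = f from Subtype.ext rfl] at hf
    · exact absurd (h.1.trans h.2.symm) f.2
  · intro hf
    exact Or.inl ⟨f.2, by rwa [show (⟨f.1, f.2⟩ : (G.quot π).E) = f from Subtype.ext rfl]⟩

lemma restrict_glue (T : Set (G.quot π).E) (t : ∀ b : B, Set (G.induced π b).E) (b : B) :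
    G.restrict π b (G.glue π T t) = t b := by
  ext f
  constructor
  · rintro (⟨h, _⟩ | ⟨b', h', hf⟩)
    · exact absurd (f.2.1.trans f.2.2.symm) h
    · obtain rfl : b' = b := h'.1.symm.trans f.2.1
      rwa [show (⟨f.1, h'⟩ : (G.induced π _).E) = f from Subtype.ext rfl] at hf
  · intro hf
    exact Or.inr ⟨b, f.2, by
      rwa [show (⟨f.1, f.2⟩ : (G.induced π b).E) = f from Subtype.ext rfl]⟩

lemma glue_eq (S : Set G.E) :
    G.glue π (G.crossing π S) (fun b => G.restrict π b S) = S := by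
  ext e
  constructor
  · rintro (⟨h, hf⟩ | ⟨b, h, hf⟩)
    · exact hf
    · exact hf
  · intro he
    by_cases h : π (G.ends e).1 = π (G.ends e).2
    · exact Or.inr ⟨π (G.ends e).1, ⟨rfl, h.symm⟩, he⟩
    · exact Or.inl ⟨h, he⟩

end Helpers3

end Multigraph

open Multigraph in
/-- The number of hierarchical spanning trees of a connected multigraph `G`, with
respect to a partition (block map `π`) whose blocks induce connected subgraphs,
equals `τ(G/P) * ∏_{B ∈ P} τ(G[B])`. -/
theorem hierarchical_tree_count (G : Multigraph) [Finite G.V] [Finite G.E]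
    {B : Type} [Fintype B] (π : G.V → B)
    (hsurj : Function.Surjective π)
    (hconn : G.Connects Set.univ)
    (hblocks : ∀ b : B, (G.induced π b).Connects Set.univ) :
    Nat.card {S : Set G.E // G.IsHierarchical π S}
      = (G.quot π).tau * ∏ b : B, (G.induced π b).tau := by
  have equiv1 : {S : Set G.E // G.IsHierarchical π S} ≃
      ({T : Set (G.quot π).E // (G.quot π).IsSpanningTree T} ×
        ((b : B) → {t : Set ((G.induced π b).E) // (G.induced π b).IsSpanningTree t})) :=
    { toFun := fun S => (⟨G.crossing π S.1, S.2.2⟩,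
        fun b => ⟨G.restrict π b S.1, G.restrict_isST π S.2 b⟩)
      invFun := fun p => ⟨G.glue π p.1.1 (fun b => (p.2 b).1), by
        have hT : (G.quot π).IsSpanningTree
            (G.crossing π (G.glue π p.1.1 (fun b => (p.2 b).1))) := by
          rw [G.crossing_glue]; exact p.1.2
        have hb : ∀ b : B, (G.induced π b).IsSpanningTree
            (G.restrict π b (G.glue π p.1.1 (fun b => (p.2 b).1))) := by
          intro b; rw [G.restrict_glue]; exact (p.2 b).2
        exact ⟨G.isST_of_pieces π hsurj hT hb, hT⟩⟩
      left_inv := fun S => Subtype.ext (G.glue_eq π S.1)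
      right_inv := fun p => by
        refine Prod.ext ?_ ?_
        · exact Subtype.ext (G.crossing_glue π _ _)
        · funext b
          exact Subtype.ext (G.restrict_glue π _ _ b) }
  rw [Nat.card_congr equiv1, Nat.card_prod, Nat.card_pi]
  rfl
end

section
/- Let G be a connected multigraph and P a partition of V(G) into connected blocks. The map sending a hierarchical spanning tree t to the pair (Q(t), (t∩G[B])_{B∈P}) is a bijection between the set of hierarchical spanning trees of G and the set of tuples consisting of a spanning tree of G/P together with a choice of spanning tree of G[B] for each block B. -/
namespace HTB

open Multigraph Relation

variable {G : Multigraph} {B : Type} {π : G.V → B}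

/-- Connectivity relation via edge set `S`. -/
abbrev Conn (G : Multigraph) (S : Set G.E) : G.V → G.V → Prop :=
  Relation.ReflTransGen (G.Adj S)

lemma adj_symm {S : Set G.E} : Symmetric (G.Adj S) := by
  rintro a b ⟨e, he, h | h⟩
  · exact ⟨e, he, Or.inr h⟩
  · exact ⟨e, he, Or.inl h⟩

lemma conn_symm {S : Set G.E} {x y : G.V} (h : Conn G S x y) : Conn G S y x :=
  (@Relation.ReflTransGen.stdSymm _ _ ⟨fun _ _ h => adj_symm h⟩).symm _ _ h

lemma adj_mono {S S' : Set G.E} (hss : S ⊆ S') {x y : G.V} (h : G.Adj S x y) :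
    G.Adj S' x y := by
  obtain ⟨e, he, h⟩ := h; exact ⟨e, hss he, h⟩

lemma conn_mono {S S' : Set G.E} (hss : S ⊆ S') {x y : G.V} (h : Conn G S x y) :
    Conn G S' x y :=
  ReflTransGen.mono (fun _ _ => adj_mono hss) _ _ h

/-- Projection of connectivity to the quotient. -/
lemma conn_proj {S : Set G.E} {X : Set (G.quot π).E} (hX : G.crossing π S ⊆ X)
    {x y : G.V} (h : Conn G S x y) : Conn (G.quot π) X (π x) (π y) := by
  induction h with
  | refl => exact .refl
  | tail _ step ih =>
    rename_i c d _
    obtain ⟨e, he, hor⟩ := step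
    by_cases hc : π (G.ends e).1 = π (G.ends e).2
    · have : π c = π d := by
        rcases hor with h' | h' <;> rw [h'] at hc <;> simp_all
      exact this ▸ ih
    · refine ih.tail ⟨⟨e, hc⟩, hX he, ?_⟩
      rcases hor with h' | h'
      · left; show (π (G.ends e).1, π (G.ends e).2) = _; rw [h']; rfl
      · right; show (π (G.ends e).1, π (G.ends e).2) = _; rw [h']; rfl

/-- Fundamental cut: in a minimal connected edge set, the endpoints of an edge are
not connected after removing it. -/
lemma not_conn_of_spanningTree {H : Multigraph} {S : Set H.E} (hS : H.IsSpanningTree S)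
    {e : H.E} (he : e ∈ S) :
    ¬ Conn H (S \ {e}) (H.ends e).1 (H.ends e).2 := by
  intro h
  refine hS.2 e he (fun a b => ?_)
  have hab := hS.1 a b
  induction hab with
  | refl => exact .refl
  | tail _ step ih =>
    obtain ⟨f, hf, hor⟩ := step
    by_cases hfe : f = e
    · subst hfe
      rcases hor with h' | h'
      · rw [h'] at h; exact ih.trans h
      · rw [h'] at h; exact ih.trans (conn_symm h)
    · exact ih.tail ⟨f, ⟨hf, hfe⟩, hor⟩

/-- Jump trichotomy: a connection either avoids `e` or passes through it. -/
lemma conn_jump {S : Set G.E} {e : G.E} {x y : G.V} (h : Conn G S x y) :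
    Conn G (S \ {e}) x y ∨
    (Conn G (S \ {e}) x (G.ends e).1 ∧ Conn G (S \ {e}) y (G.ends e).2) ∨
    (Conn G (S \ {e}) x (G.ends e).2 ∧ Conn G (S \ {e}) y (G.ends e).1) := by
  induction h with
  | refl => exact Or.inl .refl
  | tail _ step ih =>
    rename_i c d _
    obtain ⟨f, hf, hor⟩ := step
    by_cases hfe : f = e
    · subst hfe
      rcases hor with h' | h'
      · -- ends f = (c, d)
        rcases ih with h1 | ⟨h1, h2⟩ | ⟨h1, h2⟩
        · exact Or.inr (Or.inl ⟨h' ▸ h1, h' ▸ .refl⟩)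
        · exact Or.inr (Or.inl ⟨h1, h' ▸ .refl⟩)
        · rw [h'] at h1; exact Or.inl h1
      · -- ends f = (d, c)
        rcases ih with h1 | ⟨h1, h2⟩ | ⟨h1, h2⟩
        · exact Or.inr (Or.inr ⟨h' ▸ h1, h' ▸ .refl⟩)
        · rw [h'] at h1; exact Or.inl h1
        · exact Or.inr (Or.inr ⟨h1, h' ▸ .refl⟩)
    · have step' : Conn G (S \ {e}) c d := ReflTransGen.single ⟨f, ⟨hf, hfe⟩, hor⟩
      rcases ih with h1 | ⟨h1, h2⟩ | ⟨h1, h2⟩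
      · exact Or.inl (h1.trans step')
      · exact Or.inr (Or.inl ⟨h1, (conn_symm step').trans h2⟩)
      · exact Or.inr (Or.inr ⟨h1, (conn_symm step').trans h2⟩)

end HTB

namespace HTB

open Multigraph Relation

variable {G : Multigraph} {B : Type} {π : G.V → B}

/-- Removal: given that the crossing edges of `S` form a spanning tree of the quotient,
removing a crossing edge of a subset `S' ⊆ S` preserves connections between vertices
of the same block. -/
lemma conn_remove_crossing {S S' : Set G.E}
    (hQ : (G.quot π).IsSpanningTree (G.crossing π S)) (hsub : S' ⊆ S)
    {e : G.E} (he : e ∈ S') (hcr : π (G.ends e).1 ≠ π (G.ends e).2)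
    {x y : G.V} (hxy : π x = π y) (h : Conn G S' x y) :
    Conn G (S' \ {e}) x y := by
  have hmono : G.crossing π (S' \ {e}) ⊆ G.crossing π S \ {(⟨e, hcr⟩ : (G.quot π).E)} := by
    rintro f ⟨hf1, hf2⟩
    exact ⟨hsub hf1, fun hfe => hf2 (congrArg Subtype.val hfe)⟩
  have hcut := not_conn_of_spanningTree hQ (e := ⟨e, hcr⟩) (show e ∈ S from hsub he)
  rcases conn_jump (e := e) h with h1 | ⟨h1, h2⟩ | ⟨h1, h2⟩
  · exact h1
  · exact absurd ((conn_symm (conn_proj hmono h1)).trans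
      ((hxy ▸ (conn_proj hmono h2) : Conn (G.quot π) _ (π x) (π (G.ends e).2)))) hcut
  · exact absurd ((conn_symm ((hxy ▸ (conn_proj hmono h2) : Conn (G.quot π) _ (π x) (π (G.ends e).1)))).trans
      (conn_proj hmono h1)) hcut

end HTB

namespace HTB

open Multigraph Relation

variable {G : Multigraph} {B : Type} {π : G.V → B}

lemma conn_within_aux [Finite G.E] {S : Set G.E}
    (hQ : (G.quot π).IsSpanningTree (G.crossing π S)) :
    ∀ (n : ℕ) (S' : Set G.E), S' ⊆ S →
      {f ∈ S' | π (G.ends f).1 ≠ π (G.ends f).2}.ncard ≤ n →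
      ∀ {x y : G.V}, π x = π y → Conn G S' x y →
      Conn G {f ∈ S' | π (G.ends f).1 = π (G.ends f).2} x y := by
  intro n
  induction n with
  | zero =>
    intro S' hsub hcard x y hxy h
    have hempty : {f ∈ S' | π (G.ends f).1 ≠ π (G.ends f).2} = ∅ :=
      (Set.ncard_eq_zero (Set.toFinite _)).mp (Nat.le_zero.mp hcard)
    refine conn_mono (fun f hf => ?_) h
    refine ⟨hf, ?_⟩
    by_contra hcr
    have hmem : f ∈ {f ∈ S' | π (G.ends f).1 ≠ π (G.ends f).2} := ⟨hf, hcr⟩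
    rw [hempty] at hmem
    exact hmem
  | succ n ih =>
    intro S' hsub hcard x y hxy h
    rcases Set.eq_empty_or_nonempty {f ∈ S' | π (G.ends f).1 ≠ π (G.ends f).2} with
      hempty | ⟨e, he, hcr⟩
    · refine conn_mono (fun f hf => ?_) h
      refine ⟨hf, ?_⟩
      by_contra hcrf
      have hmem : f ∈ {f ∈ S' | π (G.ends f).1 ≠ π (G.ends f).2} := ⟨hf, hcrf⟩
      rw [hempty] at hmem
      exact hmem
    · have h' := conn_remove_crossing hQ hsub he hcr hxy h
      have hset : {f ∈ S' \ {e} | π (G.ends f).1 ≠ π (G.ends f).2}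
          = {f ∈ S' | π (G.ends f).1 ≠ π (G.ends f).2} \ {e} := by
        ext f; constructor
        · rintro ⟨⟨hf1, hf2⟩, hf3⟩; exact ⟨⟨hf1, hf3⟩, hf2⟩
        · rintro ⟨⟨hf1, hf3⟩, hf2⟩; exact ⟨⟨hf1, hf2⟩, hf3⟩
      have hlt : {f ∈ S' \ {e} | π (G.ends f).1 ≠ π (G.ends f).2}.ncard ≤ n := by
        rw [hset]
        have hmem : e ∈ {f ∈ S' | π (G.ends f).1 ≠ π (G.ends f).2} := ⟨he, hcr⟩
        have := Set.ncard_diff_singleton_lt_of_mem hmem (Set.toFinite _)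
        omega
      have hres := ih (S' \ {e}) (fun f hf => hsub hf.1) hlt hxy h'
      refine conn_mono (fun f hf => ?_) hres
      exact ⟨hf.1.1, hf.2⟩

/-- Same-block vertices connected by a subset of a hierarchical tree are connected
using only within-block edges. -/
lemma conn_within [Finite G.E] {S S' : Set G.E}
    (hQ : (G.quot π).IsSpanningTree (G.crossing π S)) (hsub : S' ⊆ S)
    {x y : G.V} (hxy : π x = π y) (h : Conn G S' x y) :
    Conn G {f ∈ S' | π (G.ends f).1 = π (G.ends f).2} x y :=
  conn_within_aux hQ _ S' hsub le_rfl hxy h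

/-- Lift a within-block connection to the induced block graph. -/
lemma conn_lift {W : Set G.E} (hW : ∀ f ∈ W, π (G.ends f).1 = π (G.ends f).2)
    {b : B} {x y : G.V} (h : Conn G W x y) :
    ∀ (hx : π x = b) (hy : π y = b),
      Conn (G.induced π b) (G.restrict π b W) ⟨x, hx⟩ ⟨y, hy⟩ := by
  induction h with
  | refl => intro hx hy; exact .refl
  | tail _ step ih =>
    rename_i c d _
    intro hx hy
    obtain ⟨f, hf, hor⟩ := step
    have hw := hW f hf
    have hcd : π c = π d := by
      rcases hor with h' | h' <;> rw [h'] at hw <;> simp_all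
    have hc : π c = b := hcd.trans hy
    have hf1 : π (G.ends f).1 = b := by
      rcases hor with h' | h' <;> rw [h'] <;> [exact hc; exact hy]
    have hf2 : π (G.ends f).2 = b := by
      rcases hor with h' | h' <;> rw [h'] <;> [exact hy; exact hc]
    refine (ih hx hc).tail ⟨⟨f, hf1, hf2⟩, hf, ?_⟩
    show ((⟨(G.ends f).1, hf1⟩, ⟨(G.ends f).2, hf2⟩) :
        (G.induced π b).V × (G.induced π b).V) = _ ∨ _
    rcases hor with h' | h'
    · left
      have e1 : (G.ends f).1 = c := by rw [h']
      have e2 : (G.ends f).2 = d := by rw [h']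
      exact Prod.ext (Subtype.ext e1) (Subtype.ext e2)
    · right
      have e1 : (G.ends f).1 = d := by rw [h']
      have e2 : (G.ends f).2 = c := by rw [h']
      exact Prod.ext (Subtype.ext e1) (Subtype.ext e2)

/-- Push a connection in an induced block graph down to `G`. -/
lemma conn_down {b : B} {T' : Set (G.induced π b).E} {S'' : Set G.E}
    (hsub : ∀ f ∈ T', f.1 ∈ S'') {u v : (G.induced π b).V}
    (h : Conn (G.induced π b) T' u v) : Conn G S'' u.1 v.1 := by
  induction h with
  | refl => exact .refl
  | tail _ step ih =>
    rename_i c d _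
    obtain ⟨f, hf, hor⟩ := step
    refine ih.tail ⟨f.1, hsub f hf, ?_⟩
    rcases hor with h' | h'
    · left
      have h1 := congrArg (fun p => p.1.1) h'
      have h2 := congrArg (fun p => p.2.1) h'
      exact Prod.ext h1 h2
    · right
      have h1 := congrArg (fun p => p.1.1) h'
      have h2 := congrArg (fun p => p.2.1) h'
      exact Prod.ext h1 h2

/-- Glue: block connectivity plus quotient connectivity gives global connectivity. -/
lemma conn_glue {S : Set G.E} (hb : ∀ x y : G.V, π x = π y → Conn G S x y)
    (hq : ∀ a c : B, Conn (G.quot π) (G.crossing π S) a c) : G.Connects S := by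
  intro x y
  have key : ∀ c : B, Conn (G.quot π) (G.crossing π S) (π x) c →
      ∀ v : G.V, π v = c → Conn G S x v := by
    intro c h
    induction h with
    | refl => intro v hv; exact hb x v hv.symm
    | tail _ step ih =>
      rename_i c' c'' _
      intro v hv
      obtain ⟨f, hf, hor⟩ := step
      rcases hor with h' | h'
      · have h1 : π (G.ends f.1).1 = c' := congrArg Prod.fst h'
        have h2 : π (G.ends f.1).2 = c'' := congrArg Prod.snd h'
        exact ((ih _ h1).tail ⟨f.1, hf, Or.inl rfl⟩).trans
          (hb _ v (h2.trans hv.symm))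
      · have h1 : π (G.ends f.1).1 = c'' := congrArg Prod.fst h'
        have h2 : π (G.ends f.1).2 = c' := congrArg Prod.snd h'
        exact ((ih _ h2).tail ⟨f.1, hf, Or.inr rfl⟩).trans
          (hb _ v (h1.trans hv.symm))
  exact key (π y) (hq _ _) y rfl

end HTB


open HTB in
open Multigraph in
/-- The map sending a hierarchical spanning tree `T` to the pair consisting of its
quotient tree and its family of block restrictions is a bijection onto the set of
pairs of a spanning tree of `G/P` together with a spanning tree of each block. -/
theorem hierarchical_tree_bijection (G : Multigraph) [Finite G.V] [Finite G.E]
    {B : Type} [Fintype B] (π : G.V → B)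
    (hsurj : Function.Surjective π)
    (hconn : G.Connects Set.univ)
    (hblocks : ∀ b : B, (G.induced π b).Connects Set.univ) :
    Function.Injective
      (fun T : {S : Set G.E // G.IsHierarchical π S} =>
        ((G.crossing π T.1, fun b => G.restrict π b T.1) :
          Set (G.quot π).E × ∀ b : B, Set ((G.induced π b).E))) ∧
    Set.range
      (fun T : {S : Set G.E // G.IsHierarchical π S} =>
        ((G.crossing π T.1, fun b => G.restrict π b T.1) :
          Set (G.quot π).E × ∀ b : B, Set ((G.induced π b).E)))
      = {p : Set (G.quot π).E × ∀ b : B, Set ((G.induced π b).E) |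
          (G.quot π).IsSpanningTree p.1 ∧ ∀ b : B, (G.induced π b).IsSpanningTree (p.2 b)} := by
  classical
  constructor
  · -- Injectivity
    rintro ⟨S₁, h₁⟩ ⟨S₂, h₂⟩ heq
    simp only [Prod.mk.injEq] at heq
    obtain ⟨hq, hr⟩ := heq
    apply Subtype.ext
    ext e
    by_cases hc : π (G.ends e).1 = π (G.ends e).2
    · exact (Set.ext_iff.mp (congrFun hr (π (G.ends e).1))) ⟨e, rfl, hc.symm⟩
    · exact (Set.ext_iff.mp hq) ⟨e, hc⟩
  · -- Range
    ext p
    obtain ⟨Qs, Ts⟩ := p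
    simp only [Set.mem_range, Set.mem_setOf_eq]
    constructor
    · -- forward: restrictions of a hierarchical tree are spanning trees
      rintro ⟨⟨S, hS, hQ⟩, heq⟩
      simp only [Prod.mk.injEq] at heq
      obtain ⟨hq1, hq2⟩ := heq
      subst hq1; subst hq2
      refine ⟨hQ, fun b => ⟨?_, ?_⟩⟩
      · -- connectivity of restrict
        intro u v
        have h0 : Conn G S u.1 v.1 := hS.1 u.1 v.1
        have hw := conn_within hQ (Set.Subset.refl S) (u.2.trans v.2.symm) h0
        have hl := conn_lift (fun f hf => hf.2) hw u.2 v.2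
        exact conn_mono (fun f hf => hf.1) hl
      · -- minimality of restrict
        intro e' he' hcon
        refine hS.2 e'.1 he' ?_
        intro x y
        have h0 := hS.1 x y
        have hd : Conn G (S \ {e'.1}) (G.ends e'.1).1 (G.ends e'.1).2 := by
          have hcc := hcon ⟨(G.ends e'.1).1, e'.2.1⟩ ⟨(G.ends e'.1).2, e'.2.2⟩
          refine conn_down ?_ hcc
          rintro f ⟨hf1, hf2⟩
          exact ⟨hf1, fun hfe => hf2 (Subtype.ext hfe)⟩
        rcases conn_jump (e := e'.1) h0 with h1 | ⟨h1, h2⟩ | ⟨h1, h2⟩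
        · exact h1
        · exact (h1.trans hd).trans (conn_symm h2)
        · exact (h1.trans (conn_symm hd)).trans (conn_symm h2)
    · -- backward: assemble a hierarchical tree from the pieces
      rintro ⟨hQ, hT⟩
      set S : Set G.E := {e : G.E | ∃ h : π (G.ends e).1 ≠ π (G.ends e).2,
          (⟨e, h⟩ : (G.quot π).E) ∈ Qs} ∪ ⋃ b, Subtype.val '' (Ts b) with hSdef
      have hacr : G.crossing π S = Qs := by
        ext f
        constructor
        · intro hf
          rcases hf with hl | hr
          · obtain ⟨h', hqq⟩ := hl
            exact hqq
          · exfalso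
            obtain ⟨b', hb'⟩ := Set.mem_iUnion.mp hr
            obtain ⟨g, hg, hge⟩ := hb'
            exact f.2 (by rw [← hge]; exact g.2.1.trans g.2.2.symm)
        · intro hf
          exact Or.inl ⟨f.2, hf⟩
      have hres : ∀ b, G.restrict π b S = Ts b := by
        intro b
        ext f
        constructor
        · intro hf
          rcases hf with hl | hr
          · obtain ⟨h', _⟩ := hl
            exact absurd (f.2.1.trans f.2.2.symm) h'
          · obtain ⟨b', hb'⟩ := Set.mem_iUnion.mp hr
            obtain ⟨g, hg, hge⟩ := hb'
            have hbb : b' = b := g.2.1.symm.trans (by rw [hge]; exact f.2.1)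
            subst hbb
            have : g = f := Subtype.ext hge
            rw [← this]
            exact hg
        · intro hf
          exact Or.inr (Set.mem_iUnion.mpr ⟨b, ⟨f, hf, rfl⟩⟩)
      have hQS : (G.quot π).IsSpanningTree (G.crossing π S) := by rw [hacr]; exact hQ
      have hbconn : ∀ x y : G.V, π x = π y → Conn G S x y := by
        intro x y hxy
        have hcc := (hT (π y)).1 ⟨x, hxy⟩ ⟨y, rfl⟩
        refine conn_down ?_ hcc
        intro f hf
        exact Or.inr (Set.mem_iUnion.mpr ⟨π y, ⟨f, hf, rfl⟩⟩)
      have hconnS : G.Connects S := conn_glue hbconn (by rw [hacr]; exact hQ.1)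
      have hmin : ∀ e ∈ S, ¬ G.Connects (S \ {e}) := by
        intro e he hcon
        by_cases hc : π (G.ends e).1 = π (G.ends e).2
        · -- within-block edge
          have hmem : e ∈ ⋃ b, Subtype.val '' (Ts b) := by
            rcases he with hl | hr
            · obtain ⟨h', _⟩ := hl; exact absurd hc h'
            · exact hr
          obtain ⟨b', hb'⟩ := Set.mem_iUnion.mp hmem
          obtain ⟨g, hg, hge⟩ := hb'
          refine (hT b').2 g hg ?_
          intro u v
          have h0 : Conn G (S \ {e}) u.1 v.1 := hcon u.1 v.1
          have hw := conn_within hQS Set.diff_subset (u.2.trans v.2.symm) h0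
          have hl := conn_lift (fun f hf => hf.2) hw u.2 v.2
          refine conn_mono ?_ hl
          rintro f ⟨⟨hf1, hfne⟩, hfw⟩
          refine ⟨?_, ?_⟩
          · exact (hres b') ▸ (show f ∈ G.restrict π b' S from hf1)
          · intro hfg
            exact hfne (by rw [hfg]; exact hge)
        · -- crossing edge
          have heQ : (⟨e, hc⟩ : (G.quot π).E) ∈ Qs := by
            rcases he with hl | hr
            · obtain ⟨h', hqq⟩ := hl
              exact hqq
            · exfalso
              obtain ⟨b', hb'⟩ := Set.mem_iUnion.mp hr
              obtain ⟨g, hg, hge⟩ := hb'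
              exact hc (by rw [← hge]; exact g.2.1.trans g.2.2.symm)
          refine hQ.2 ⟨e, hc⟩ heQ ?_
          intro a c
          obtain ⟨u, rfl⟩ := hsurj a
          obtain ⟨v, rfl⟩ := hsurj c
          refine conn_proj ?_ (hcon u v)
          rintro f ⟨hf1, hfne⟩
          refine ⟨?_, ?_⟩
          · rw [← hacr]; exact hf1
          · exact fun hfe => hfne (congrArg Subtype.val hfe)
      exact ⟨⟨S, ⟨hconnS, hmin⟩, hQS⟩, Prod.ext hacr (funext hres)⟩
end

section
/- Induced measure on partitions: with P(T, L) ∝ e^{-β J(ξ(T))} (τ_H(ξ(T)) 𝓛(ξ(T)))^{-γ} on pairs of hierarchical forests and linking edge sets, the marginal probability of a partition ξ satisfies P(ξ) ∝ e^{-β J(ξ)} · τ_H(ξ)^{1-γ} · 𝓛(ξ)^{1-γ}, where the sum is over all hierarchical forests T with ξ(T) = ξ and all allowable linking edge sets L for ξ. In particular, when γ = 1 the marginal is proportional to e^{-β J(ξ)}, independent of the number of forests and linking edge sets. -/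
/-- Induced measure on partitions: with
`P(T, L) = Z⁻¹ e^{-β J(ξ(T))} (τ_H(ξ(T)) 𝓛(ξ(T)))^{-γ}` on pairs of hierarchical
forests and allowable linking edge sets, the marginal probability of a partition `ξ₀`
(the sum of `P(T, L)` over all forests `T` with `ξ(T) = ξ₀` and all allowable linking
edge sets `L` for `ξ₀`) equals `Z⁻¹ e^{-β J(ξ₀)} τ_H(ξ₀)^{1-γ} 𝓛(ξ₀)^{1-γ}`.
In particular, when `γ = 1` the marginal is `Z⁻¹ e^{-β J(ξ₀)}`. -/
theorem marginal_on_partitions {Forest LinkSet Partition : Type}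
    [Fintype Forest] [DecidableEq Partition]
    (ξ : Forest → Partition) (J : Partition → ℝ)
    (allow : Partition → Finset LinkSet)
    (τH 𝓛 : Partition → ℝ)
    (hτH : ∀ x, 1 ≤ τH x) (h𝓛 : ∀ x, 1 ≤ 𝓛 x)
    (hτ : ∀ x : Partition, τH x = (Nat.card {T : Forest // ξ T = x} : ℝ))
    (hcard : ∀ x : Partition, 𝓛 x = ((allow x).card : ℝ))
    (β γ Z : ℝ) (hβ : β ∈ Set.Icc (0 : ℝ) 1) (hγ : γ ∈ Set.Icc (0 : ℝ) 1)
    (P : Forest × LinkSet → ℝ)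
    (hP : ∀ s : Forest × LinkSet, s.2 ∈ allow (ξ s.1) →
      P s = Z⁻¹ * Real.exp (-β * J (ξ s.1)) * (τH (ξ s.1) * 𝓛 (ξ s.1)) ^ (-γ)) :
    ∀ x : Partition,
      (∑ T : Forest, ∑ Lk ∈ allow x, if ξ T = x then P (T, Lk) else 0)
        = Z⁻¹ * Real.exp (-β * J x) * τH x ^ (1 - γ) * 𝓛 x ^ (1 - γ) ∧
      (γ = 1 →
        (∑ T : Forest, ∑ Lk ∈ allow x, if ξ T = x then P (T, Lk) else 0)
          = Z⁻¹ * Real.exp (-β * J x)) := by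
  intro x
  have hτpos : (0 : ℝ) < τH x := lt_of_lt_of_le one_pos (hτH x)
  have h𝓛pos : (0 : ℝ) < 𝓛 x := lt_of_lt_of_le one_pos (h𝓛 x)
  set c : ℝ := Z⁻¹ * Real.exp (-β * J x) * (τH x * 𝓛 x) ^ (-γ) with hc
  have step1 : (∑ T : Forest, ∑ Lk ∈ allow x, if ξ T = x then P (T, Lk) else 0)
      = τH x * (𝓛 x * c) := by
    have : ∀ T : Forest, (∑ Lk ∈ allow x, if ξ T = x then P (T, Lk) else 0)
        = if ξ T = x then 𝓛 x * c else 0 := by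
      intro T
      by_cases h : ξ T = x
      · simp only [h, if_true]
        rw [Finset.sum_congr rfl fun Lk hLk => hP (T, Lk) (by rw [h]; exact hLk)]
        simp [h, hcard x, hc, Finset.sum_const, nsmul_eq_mul, mul_comm]
      · simp [h]
    rw [Finset.sum_congr rfl fun T _ => this T, ← Finset.sum_filter,
      Finset.sum_const, nsmul_eq_mul]
    congr 1
    rw [hτ x, Nat.card_eq_fintype_card, Fintype.card_subtype]
  have key : τH x * (𝓛 x * c) = Z⁻¹ * Real.exp (-β * J x) * τH x ^ (1 - γ)
      * 𝓛 x ^ (1 - γ) := by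
    rw [hc]
    have h1 : (τH x * 𝓛 x) ^ (-γ) = τH x ^ (-γ) * 𝓛 x ^ (-γ) :=
      Real.mul_rpow hτpos.le h𝓛pos.le
    have h2 : τH x * τH x ^ (-γ) = τH x ^ (1 - γ) := by
      rw [sub_eq_add_neg, Real.rpow_add hτpos, Real.rpow_one]
    have h3 : 𝓛 x * 𝓛 x ^ (-γ) = 𝓛 x ^ (1 - γ) := by
      rw [sub_eq_add_neg, Real.rpow_add h𝓛pos, Real.rpow_one]
    rw [h1]
    calc τH x * (𝓛 x * (Z⁻¹ * Real.exp (-β * J x) * (τH x ^ (-γ) * 𝓛 x ^ (-γ))))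
        = Z⁻¹ * Real.exp (-β * J x) * (τH x * τH x ^ (-γ)) * (𝓛 x * 𝓛 x ^ (-γ)) := by
          ring
      _ = _ := by rw [h2, h3]
  refine ⟨step1.trans key, fun hγ1 => ?_⟩
  rw [step1, key, hγ1]
  simp
end

section
/- Ratio of partition probabilities: under the measure P(T,L) ∝ e^{-β J(ξ(T))}(τ_H(ξ(T))𝓛(ξ(T)))^{-γ}, for any two partitions ξ, ξ' with nonzero probability, the ratio of induced marginal probabilities is P(ξ)/P(ξ') = (τ_H(ξ)𝓛(ξ))^{1-γ} / (τ_H(ξ')𝓛(ξ'))^{1-γ} · e^{-β(J(ξ)-J(ξ'))}. -/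
/-- Ratio of partition probabilities: under the measure
`P(T, L) = Z⁻¹ e^{-β J(ξ(T))} (τ_H(ξ(T)) 𝓛(ξ(T)))^{-γ}`, for any two partitions of
nonzero marginal probability, the ratio of the induced marginal probabilities is
`(τ_H(ξ) 𝓛(ξ))^{1-γ} / (τ_H(ξ') 𝓛(ξ'))^{1-γ} · e^{-β (J(ξ) - J(ξ'))}`. -/
theorem partition_probability_ratio {Forest LinkSet Partition : Type}
    [Fintype Forest] [DecidableEq Partition]
    (ξ : Forest → Partition) (J : Partition → ℝ)
    (allow : Partition → Finset LinkSet)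
    (τH 𝓛 : Partition → ℝ)
    (hτH : ∀ x, 1 ≤ τH x) (h𝓛 : ∀ x, 1 ≤ 𝓛 x)
    (hτ : ∀ x : Partition, τH x = (Nat.card {T : Forest // ξ T = x} : ℝ))
    (hcard : ∀ x : Partition, 𝓛 x = ((allow x).card : ℝ))
    (β γ Z : ℝ) (hβ : β ∈ Set.Icc (0 : ℝ) 1) (hγ : γ ∈ Set.Icc (0 : ℝ) 1)
    (P : Forest × LinkSet → ℝ)
    (hP : ∀ s : Forest × LinkSet, s.2 ∈ allow (ξ s.1) →
      P s = Z⁻¹ * Real.exp (-β * J (ξ s.1)) * (τH (ξ s.1) * 𝓛 (ξ s.1)) ^ (-γ))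
    (M : Partition → ℝ)
    (hM : ∀ x : Partition,
      M x = ∑ T : Forest, ∑ Lk ∈ allow x, if ξ T = x then P (T, Lk) else 0) :
    ∀ x x' : Partition, M x ≠ 0 → M x' ≠ 0 →
      M x / M x'
        = (τH x * 𝓛 x) ^ (1 - γ) / (τH x' * 𝓛 x') ^ (1 - γ)
            * Real.exp (-β * (J x - J x')) := by
  have hpos : ∀ x, (0:ℝ) < τH x * 𝓛 x := fun x => by nlinarith [hτH x, h𝓛 x]
  have key : ∀ x, M x = Z⁻¹ * Real.exp (-β * J x) * (τH x * 𝓛 x) ^ (1 - γ) := by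
    intro x
    rw [hM]
    have step1 : ∀ T : Forest,
        (∑ Lk ∈ allow x, if ξ T = x then P (T, Lk) else 0)
        = if ξ T = x then 𝓛 x * (Z⁻¹ * Real.exp (-β * J x) * (τH x * 𝓛 x) ^ (-γ))
          else 0 := by
      intro T
      by_cases h : ξ T = x
      · simp only [h, if_true]
        rw [Finset.sum_congr rfl (fun Lk hLk => hP (T, Lk) (by simpa [h] using hLk))]
        simp [Finset.sum_const, hcard x, h, nsmul_eq_mul]
      · simp [h]
    rw [Finset.sum_congr rfl (fun T _ => step1 T), ← Finset.sum_filter,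
      Finset.sum_const, nsmul_eq_mul]
    have hτc : ((Finset.univ.filter (fun T => ξ T = x)).card : ℝ) = τH x := by
      rw [hτ x, Nat.card_eq_fintype_card, Fintype.card_subtype]
    rw [hτc]
    have hrpow : (τH x * 𝓛 x) ^ (1 - γ)
        = (τH x * 𝓛 x) * (τH x * 𝓛 x) ^ (-γ) := by
      rw [show (1 : ℝ) - γ = 1 + (-γ) by ring, Real.rpow_add (hpos x),
        Real.rpow_one]
    rw [hrpow]; ring
  intro x x' hx hx'
  have hZ : Z⁻¹ ≠ 0 := by
    intro h; apply hx; rw [key x, h]; ring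
  have hZ0 : Z ≠ 0 := by intro h; exact hZ (by simp [h])
  have he' : Real.exp (-β * J x') ≠ 0 := Real.exp_ne_zero _
  have hB : (τH x' * 𝓛 x') ^ (1 - γ) ≠ 0 :=
    ne_of_gt (Real.rpow_pos_of_pos (hpos x') _)
  have hexp : Real.exp (-β * (J x - J x'))
      = Real.exp (-β * J x) / Real.exp (-β * J x') := by
    rw [← Real.exp_sub]; ring_nf
  rw [key x, key x', hexp]
  field_simp
end
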